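/- Let r > 2, α ≥ 0, and k₁, k₂ ∈ ℕ. Then Σ_{i=0}^∞ (1/r^{2i+k₁+k₂}) Σ_{j=0}^{i} (α)_{i+k₁}(α)_{i+k₂}/(j!(i+k₁−j)!(j+k₂)!(i−j)!) = (1/r^{k₁+k₂}) · ((α)_{k₁}(α)_{k₂}/(k₁! k₂!)) · ₄F₃(α+k₁, α+k₂, (k₁+k₂+1)/2, (k₁+k₂)/2 + 1; k₁+1, k₂+1, k₁+k₂+1; 4/r²), with both series absolutely convergent. -/

import Mathlib

open scoped BigOperators

/-- The (rising) Pochhammer symbol `(a)_n` for a real number `a`. -/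
noncomputable def poch (a : ℝ) (n : ℕ) : ℝ := (ascPochhammer ℝ n).eval a

/-- The `n`-th term of the generalized hypergeometric series `₄F₃`. -/
noncomputable def F43term (a₁ a₂ a₃ a₄ b₁ b₂ b₃ x : ℝ) (n : ℕ) : ℝ :=
  (poch a₁ n * poch a₂ n * poch a₃ n * poch a₄ n) /
      (poch b₁ n * poch b₂ n * poch b₃ n * (n.factorial : ℝ)) * x ^ n

/-- The generalized hypergeometric series `₄F₃(a₁,a₂,a₃,a₄; b₁,b₂,b₃; x)`. -/
noncomputable def F43 (a₁ a₂ a₃ a₄ b₁ b₂ b₃ x : ℝ) : ℝ :=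
  ∑' n : ℕ, F43term a₁ a₂ a₃ a₄ b₁ b₂ b₃ x n

open Filter

lemma poch_succ (a : ℝ) (n : ℕ) : poch a (n + 1) = poch a n * (a + n) :=
  ascPochhammer_succ_eval n a

lemma poch_add (a : ℝ) (n m : ℕ) : poch a (n + m) = poch a n * poch (a + n) m := by
  have h := congrArg (Polynomial.eval a) (ascPochhammer_mul (S := ℝ) n m)
  simpa [poch, Polynomial.eval_comp] using h.symm

lemma poch_pos {a : ℝ} (ha : 0 < a) (n : ℕ) : 0 < poch a n := ascPochhammer_pos n a ha

lemma poch_nonneg {a : ℝ} (ha : 0 ≤ a) (n : ℕ) : 0 ≤ poch a n := by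
  induction n with
  | zero => simp [poch]
  | succ n ih => rw [poch_succ]; exact mul_nonneg ih (by positivity)

lemma fact_mul_poch (k i : ℕ) :
    (k.factorial : ℝ) * poch ((k : ℝ) + 1) i = ((k + i).factorial : ℝ) :=
  factorial_mul_ascPochhammer ℝ k i

lemma poch_dup (m : ℝ) (i : ℕ) :
    poch ((m + 1) / 2) i * poch (m / 2 + 1) i * 4 ^ i = poch (m + 1) (2 * i) := by
  induction i with
  | zero => simp [poch]
  | succ i ih =>
    have h2 : 2 * (i + 1) = 2 * i + 1 + 1 := by ring
    rw [h2, poch_succ, poch_succ, poch_succ, poch_succ, pow_succ]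
    push_cast
    linear_combination (4 * ((m + 1) / 2 + (i : ℝ)) * (m / 2 + 1 + (i : ℝ))) * ih

lemma vand_nat (i k₁ k₂ : ℕ) :
    ∑ j ∈ Finset.range (i + 1), (i + k₁).choose j * (i + k₂).choose (i - j)
      = (2 * i + k₁ + k₂).choose i := by
  have h := Nat.add_choose_eq (i + k₁) (i + k₂) i
  rw [Finset.Nat.sum_antidiagonal_eq_sum_range_succ_mk] at h
  rw [← h]; congr 1; ring

lemma vand (i k₁ k₂ : ℕ) :
    ∑ j ∈ Finset.range (i + 1),
        ((j.factorial : ℝ) * ((i + k₁ - j).factorial : ℝ) *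
          ((j + k₂).factorial : ℝ) * ((i - j).factorial : ℝ))⁻¹
      = ((2 * i + k₁ + k₂).choose i : ℝ) /
          (((i + k₁).factorial : ℝ) * ((i + k₂).factorial : ℝ)) := by
  rw [← vand_nat i k₁ k₂]
  push_cast
  rw [Finset.sum_div]
  refine Finset.sum_congr rfl fun j hj => ?_
  have hji : j ≤ i := Nat.lt_succ_iff.mp (Finset.mem_range.mp hj)
  have h1 : j.factorial * (i + k₁ - j).factorial * (i + k₁).choose j = (i + k₁).factorial := by
    rw [mul_comm, ← mul_assoc]
    exact Nat.choose_mul_factorial_mul_factorial (le_trans hji (Nat.le_add_right i k₁))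
  have h2 : (i - j).factorial * (j + k₂).factorial * (i + k₂).choose (i - j)
      = (i + k₂).factorial := by
    have hd : i + k₂ - (i - j) = j + k₂ := by omega
    have := Nat.choose_mul_factorial_mul_factorial
      (le_trans (Nat.sub_le i j) (Nat.le_add_right i k₂))
    rw [mul_comm ((i + k₂).choose (i - j)), mul_assoc, hd] at this
    rw [← this]; ring
  have e1 : ((i + k₁).factorial : ℝ) = (j.factorial : ℝ) * ((i + k₁ - j).factorial : ℝ)
      * ((i + k₁).choose j : ℝ) := by exact_mod_cast congrArg (Nat.cast (R := ℝ)) h1.symm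
  have e2 : ((i + k₂).factorial : ℝ) = ((i - j).factorial : ℝ) * ((j + k₂).factorial : ℝ)
      * ((i + k₂).choose (i - j) : ℝ) := by exact_mod_cast congrArg (Nat.cast (R := ℝ)) h2.symm
  rw [e1, e2]
  have f0 : ∀ n : ℕ, ((n.factorial : ℝ)) ≠ 0 := fun n => Nat.cast_ne_zero.mpr n.factorial_ne_zero
  have c1 : (((i + k₁).choose j : ℕ) : ℝ) ≠ 0 :=
    Nat.cast_ne_zero.mpr (Nat.choose_pos (le_trans hji (Nat.le_add_right i k₁))).ne'
  have c2 : (((i + k₂).choose (i - j) : ℕ) : ℝ) ≠ 0 :=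
    Nat.cast_ne_zero.mpr
      (Nat.choose_pos (le_trans (Nat.sub_le i j) (Nat.le_add_right i k₂))).ne'
  field_simp

lemma term_eq (r α : ℝ) (hr : 2 < r) (k₁ k₂ i : ℕ) :
    (1 : ℝ) / r ^ (2 * i + k₁ + k₂) *
        ∑ j ∈ Finset.range (i + 1),
          poch α (i + k₁) * poch α (i + k₂) /
            ((j.factorial : ℝ) * ((i + k₁ - j).factorial : ℝ) *
              ((j + k₂).factorial : ℝ) * ((i - j).factorial : ℝ))
    = (1 / r ^ (k₁ + k₂) * (poch α k₁ * poch α k₂ / ((k₁.factorial : ℝ) * (k₂.factorial : ℝ)))) *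
      F43term (α + k₁) (α + k₂) (((k₁ : ℝ) + k₂ + 1) / 2) (((k₁ : ℝ) + k₂) / 2 + 1)
          ((k₁ : ℝ) + 1) ((k₂ : ℝ) + 1) ((k₁ : ℝ) + k₂ + 1) (4 / r ^ 2) i := by
  have hr0 : (0 : ℝ) < r := lt_trans two_pos hr
  have f0 : ∀ n : ℕ, ((n.factorial : ℝ)) ≠ 0 := fun n => Nat.cast_ne_zero.mpr n.factorial_ne_zero
  have hsum : ∑ j ∈ Finset.range (i + 1),
      poch α (i + k₁) * poch α (i + k₂) /
        ((j.factorial : ℝ) * ((i + k₁ - j).factorial : ℝ) *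
          ((j + k₂).factorial : ℝ) * ((i - j).factorial : ℝ))
      = poch α (i + k₁) * poch α (i + k₂) *
        (((2 * i + k₁ + k₂).choose i : ℝ) /
          (((i + k₁).factorial : ℝ) * ((i + k₂).factorial : ℝ))) := by
    rw [← vand, Finset.mul_sum]
    exact Finset.sum_congr rfl fun j _ => by rw [div_eq_mul_inv]
  rw [hsum]
  have hA : poch α (i + k₁) = poch α k₁ * poch (α + k₁) i := by
    rw [Nat.add_comm i k₁]; exact poch_add α k₁ i
  have hB : poch α (i + k₂) = poch α k₂ * poch (α + k₂) i := by
    rw [Nat.add_comm i k₂]; exact poch_add α k₂ i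
  have e1 : poch ((k₁ : ℝ) + 1) i = ((k₁ + i).factorial : ℝ) / (k₁.factorial : ℝ) := by
    rw [eq_div_iff (f0 k₁), mul_comm]; exact fact_mul_poch k₁ i
  have e2 : poch ((k₂ : ℝ) + 1) i = ((k₂ + i).factorial : ℝ) / (k₂.factorial : ℝ) := by
    rw [eq_div_iff (f0 k₂), mul_comm]; exact fact_mul_poch k₂ i
  have e3 : poch ((k₁ : ℝ) + k₂ + 1) i
      = ((k₁ + k₂ + i).factorial : ℝ) / ((k₁ + k₂).factorial : ℝ) := by
    rw [eq_div_iff (f0 (k₁ + k₂)), mul_comm]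
    have := fact_mul_poch (k₁ + k₂) i
    push_cast at this ⊢
    linarith [this]
  have hXY : poch (((k₁ : ℝ) + k₂ + 1) / 2) i * poch (((k₁ : ℝ) + k₂) / 2 + 1) i * 4 ^ i
      = ((k₁ + k₂ + 2 * i).factorial : ℝ) / ((k₁ + k₂).factorial : ℝ) := by
    rw [poch_dup ((k₁ : ℝ) + k₂) i, eq_div_iff (f0 (k₁ + k₂)), mul_comm]
    have := fact_mul_poch (k₁ + k₂) (2 * i)
    push_cast at this ⊢
    linarith [this]
  have hch : ((2 * i + k₁ + k₂).choose i : ℝ) * (i.factorial : ℝ)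
      * ((i + k₁ + k₂).factorial : ℝ) = ((2 * i + k₁ + k₂).factorial : ℝ) := by
    have h := Nat.choose_mul_factorial_mul_factorial
      (show i ≤ 2 * i + k₁ + k₂ by omega)
    rw [show 2 * i + k₁ + k₂ - i = i + k₁ + k₂ by omega] at h
    exact_mod_cast congrArg (Nat.cast (R := ℝ)) h
  have hF : F43term (α + k₁) (α + k₂) (((k₁ : ℝ) + k₂ + 1) / 2) (((k₁ : ℝ) + k₂) / 2 + 1)
        ((k₁ : ℝ) + 1) ((k₂ : ℝ) + 1) ((k₁ : ℝ) + k₂ + 1) (4 / r ^ 2) i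
      = (poch (α + k₁) i * poch (α + k₂) i *
          (poch (((k₁ : ℝ) + k₂ + 1) / 2) i * poch (((k₁ : ℝ) + k₂) / 2 + 1) i * 4 ^ i)) /
        (poch ((k₁ : ℝ) + 1) i * poch ((k₂ : ℝ) + 1) i * poch ((k₁ : ℝ) + k₂ + 1) i *
          (i.factorial : ℝ) * r ^ (2 * i)) := by
    unfold F43term
    rw [div_pow, ← pow_mul]
    ring
  rw [hF, hXY, hA, hB, e1, e2, e3]
  have hrne : r ≠ 0 := ne_of_gt hr0
  have hpow : r ^ (2 * i + k₁ + k₂) = r ^ (2 * i) * r ^ (k₁ + k₂) := by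
    rw [← pow_add, Nat.add_assoc]
  have hik1 : (i + k₁).factorial = (k₁ + i).factorial := by rw [Nat.add_comm]
  have hik2 : (i + k₂).factorial = (k₂ + i).factorial := by rw [Nat.add_comm]
  have hikk : ((2 * i + k₁ + k₂).choose i : ℝ)
      = ((2 * i + k₁ + k₂).factorial : ℝ) /
        ((i.factorial : ℝ) * ((i + k₁ + k₂).factorial : ℝ)) := by
    rw [eq_div_iff (by positivity)]
    rw [← mul_assoc]
    exact hch
  have hkk2i : k₁ + k₂ + 2 * i = 2 * i + k₁ + k₂ := by omega
  have hkki : k₁ + k₂ + i = i + k₁ + k₂ := by omega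
  rw [hik1, hik2, hikk, hpow, hkk2i, hkki]
  have nz1 := f0 i
  have nz2 := f0 (k₁ + i)
  have nz3 := f0 (k₂ + i)
  have nz4 := f0 (i + k₁ + k₂)
  have nz5 := f0 (2 * i + k₁ + k₂)
  have nz6 := f0 k₁
  have nz7 := f0 k₂
  have nz8 := f0 (k₁ + k₂)
  have rp1 : r ^ (2 * i) ≠ 0 := pow_ne_zero _ hrne
  have rp2 : r ^ (k₁ + k₂) ≠ 0 := pow_ne_zero _ hrne
  field_simp

lemma tendsto_ratio (a b : ℝ) (hb : 0 < b) :
    Tendsto (fun n : ℕ => (a + n) / (b + n)) atTop (nhds 1) := by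
  have h : Tendsto (fun n : ℕ => b + (n : ℝ)) atTop atTop :=
    tendsto_atTop_add_const_left _ b tendsto_natCast_atTop_atTop
  have h0 : Tendsto (fun n : ℕ => (1 : ℝ) + (a - b) / (b + n)) atTop (nhds (1 + 0)) :=
    (tendsto_const_nhds.div_atTop h).const_add 1
  rw [add_zero] at h0
  refine h0.congr fun n => ?_
  have hbn : (0 : ℝ) < b + n := by positivity
  field_simp
  ring

lemma summable_F43term {a₁ a₂ a₃ a₄ b₁ b₂ b₃ x : ℝ}
    (h₁ : 0 ≤ a₁) (h₂ : 0 ≤ a₂) (h₃ : 0 < a₃) (h₄ : 0 < a₄)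
    (g₁ : 0 < b₁) (g₂ : 0 < b₂) (g₃ : 0 < b₃) (hx0 : 0 ≤ x) (hx1 : x < 1) :
    Summable (F43term a₁ a₂ a₃ a₄ b₁ b₂ b₃ x) := by
  set f := F43term a₁ a₂ a₃ a₄ b₁ b₂ b₃ x with hf
  set R : ℕ → ℝ := fun n =>
    x * ((a₁ + n) / (b₁ + n)) * ((a₂ + n) / (b₂ + n)) * ((a₃ + n) / (b₃ + n))
      * ((a₄ + n) / (1 + n)) with hR
  have hnn : ∀ n, 0 ≤ f n := by
    intro n
    apply mul_nonneg _ (pow_nonneg hx0 n)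
    apply div_nonneg
    · exact mul_nonneg (mul_nonneg (mul_nonneg (poch_nonneg h₁ n) (poch_nonneg h₂ n))
        (poch_nonneg h₃.le n)) (poch_nonneg h₄.le n)
    · have := poch_pos g₁ n
      have := poch_pos g₂ n
      have := poch_pos g₃ n
      have := n.factorial_pos
      positivity
  have hrec : ∀ n, f (n + 1) = f n * R n := by
    intro n
    rw [hf]
    simp only [F43term, poch_succ, Nat.factorial_succ, Nat.cast_mul, pow_succ, hR]
    have d1 := poch_pos g₁ n
    have d2 := poch_pos g₂ n
    have d3 := poch_pos g₃ n
    have d4 : (0:ℝ) < (n.factorial : ℝ) := by exact_mod_cast n.factorial_pos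
    have e1 : (0:ℝ) < b₁ + n := by positivity
    have e2 : (0:ℝ) < b₂ + n := by positivity
    have e3 : (0:ℝ) < b₃ + n := by positivity
    have e4 : (0:ℝ) < 1 + (n:ℝ) := by positivity
    have e5 : ((n:ℝ) + 1) = 1 + (n:ℝ) := by ring
    field_simp
    push_cast
    ring
  have hRlim : Tendsto R atTop (nhds x) := by
    have := ((((tendsto_const_nhds : Filter.Tendsto (fun _ : ℕ => x) atTop (nhds x)).mul
      (tendsto_ratio a₁ b₁ g₁)).mul
      (tendsto_ratio a₂ b₂ g₂)).mul (tendsto_ratio a₃ b₃ g₃)).mul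
      (tendsto_ratio a₄ 1 one_pos)
    simpa using this
  have hq : x < (1 + x) / 2 := by linarith
  have hev : ∀ᶠ n in atTop, R n ≤ (1 + x) / 2 :=
    hRlim.eventually_le_const hq
  apply summable_of_ratio_norm_eventually_le (r := (1 + x) / 2) (by linarith)
  filter_upwards [hev] with n hn
  rw [Real.norm_of_nonneg (hnn _), Real.norm_of_nonneg (hnn _), hrec]
  calc f n * R n ≤ f n * ((1 + x) / 2) := mul_le_mul_of_nonneg_left hn (hnn n)
    _ = (1 + x) / 2 * f n := by ring

/-- Summation formula for `c_{k₁,-k₂}`: the double series equals the `₄F₃` value,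
with both series absolutely convergent. -/
theorem stmt4 (r α : ℝ) (hr : 2 < r) (hα : 0 ≤ α) (k₁ k₂ : ℕ) :
    Summable (fun i : ℕ =>
      (1 : ℝ) / r ^ (2 * i + k₁ + k₂) *
        ∑ j ∈ Finset.range (i + 1),
          poch α (i + k₁) * poch α (i + k₂) /
            ((j.factorial : ℝ) * ((i + k₁ - j).factorial : ℝ) *
              ((j + k₂).factorial : ℝ) * ((i - j).factorial : ℝ))) ∧
    Summable (F43term (α + k₁) (α + k₂) (((k₁ : ℝ) + k₂ + 1) / 2) (((k₁ : ℝ) + k₂) / 2 + 1)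
          ((k₁ : ℝ) + 1) ((k₂ : ℝ) + 1) ((k₁ : ℝ) + k₂ + 1) (4 / r ^ 2)) ∧
    (∑' i : ℕ,
      (1 : ℝ) / r ^ (2 * i + k₁ + k₂) *
        ∑ j ∈ Finset.range (i + 1),
          poch α (i + k₁) * poch α (i + k₂) /
            ((j.factorial : ℝ) * ((i + k₁ - j).factorial : ℝ) *
              ((j + k₂).factorial : ℝ) * ((i - j).factorial : ℝ))) =
      1 / r ^ (k₁ + k₂) * (poch α k₁ * poch α k₂ / ((k₁.factorial : ℝ) * (k₂.factorial : ℝ))) *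
        F43 (α + k₁) (α + k₂) (((k₁ : ℝ) + k₂ + 1) / 2) (((k₁ : ℝ) + k₂) / 2 + 1)
          ((k₁ : ℝ) + 1) ((k₂ : ℝ) + 1) ((k₁ : ℝ) + k₂ + 1) (4 / r ^ 2) := by
  have hr0 : (0 : ℝ) < r := lt_trans two_pos hr
  have hx0 : (0 : ℝ) ≤ 4 / r ^ 2 := by positivity
  have hx1 : 4 / r ^ 2 < 1 := by
    rw [div_lt_one (by positivity)]
    nlinarith
  have hsumF : Summable (F43term (α + k₁) (α + k₂) (((k₁ : ℝ) + k₂ + 1) / 2)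
      (((k₁ : ℝ) + k₂) / 2 + 1) ((k₁ : ℝ) + 1) ((k₂ : ℝ) + 1) ((k₁ : ℝ) + k₂ + 1)
      (4 / r ^ 2)) := by
    apply summable_F43term
    · positivity
    · positivity
    · positivity
    · positivity
    · positivity
    · positivity
    · positivity
    · exact hx0
    · exact hx1
  set c : ℝ := 1 / r ^ (k₁ + k₂) *
    (poch α k₁ * poch α k₂ / ((k₁.factorial : ℝ) * (k₂.factorial : ℝ))) with hc
  have key := fun i => term_eq r α hr k₁ k₂ i
  refine ⟨?_, hsumF, ?_⟩
  · exact (hsumF.mul_left c).congr fun i => (key i).symm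
  · rw [tsum_congr key, tsum_mul_left]
    rfl
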